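/- arXiv:2404.06763 — 3 statements merged into one kernel-verified Lean document; each statement's English description precedes it below -/
import Mathlib

section
/- Let 𝕂 be a field. Suppose (A_n, d'_n), (B_n, d''_n), (C_n, d_n) are cochain complexes of 𝕂-vector spaces (with differentials d'_n : A_{n+1} → A_n, d''_n : B_{n+1} → B_n, d_n : C_{n+1} → C_n satisfying d'_{n-1} ∘ d'_n = 0, d''_{n-1} ∘ d''_n = 0, d_{n-1} ∘ d_n = 0 for all n ≥ 1) such that: (1) for every n ≥ 0, A_n and B_n are finite-dimensional; (2) the complex (B_n, d''_n) is exact, i.e. ker d''_{k-1} = im d''_k for all k ≥ 1; (3) C_n = A_n ⊕ B_n for every n; (4) d_n restricted to the summand B_{n+1} lands in B_n and coincides with d''_n, and the composite of the inclusion A_{n+1} → C_{n+1}, the map d_n, and the projection π_{1,n} : A_n ⊕ B_n → A_n equals d'_n. Then for every k ≥ 1, rank ker d_k = rank ker d'_k + rank ker d''_k. -/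
/-!
Project `ker d_k ⊆ A_{k+1} ⊕ B_{k+1}` to `A_{k+1}`. Since `d` maps `B` into `B` by `d''`, the
`A`-component of `d (a, b)` is `d' a`, so the image lies in `ker d'_k`, and the kernel of the
projection is `0 ⊕ ker d''_k`. The projection is onto `ker d'_k`: for `a ∈ ker d'_k` we have
`d (a, 0) = (0, c)` with `d'' c = 0` because `d ∘ d = 0`, so exactness of `B` gives `c = d'' b`
and `(a, -b) ∈ ker d_k`. Rank–nullity finishes the proof.
-/

open LinearMap Module

theorem Submodule.finrank_map_add_finrank_inf_ker {K V W : Type*} [DivisionRing K]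
    [AddCommGroup V] [Module K V] [AddCommGroup W] [Module K W]
    (p : Submodule K V) [FiniteDimensional K p] (f : V →ₗ[K] W) :
    finrank K (p.map f) + finrank K ↥(p ⊓ ker f) = finrank K p := by
  rw [← range_domRestrict, ← map_comap_subtype, ← ker_domRestrict, finrank_map_subtype_eq]
  exact finrank_range_add_finrank_ker _

namespace LinearMap

variable {R M N M' N' M'' N'' : Type*} [Ring R]
  [AddCommGroup M] [Module R M] [AddCommGroup N] [Module R N]
  [AddCommGroup M'] [Module R M'] [AddCommGroup N'] [Module R N']
  [AddCommGroup M''] [Module R M''] [AddCommGroup N''] [Module R N'']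
  {f : M × N →ₗ[R] M' × N'} {g : N →ₗ[R] N'}

theorem apply_zero_mk_of_comp_inr (hf : f ∘ₗ inr R M N = inr R M' N' ∘ₗ g) (b : N) :
    f (0, b) = (0, g b) :=
  congr($hf b)

theorem apply_mk_of_comp_inr (hf : f ∘ₗ inr R M N = inr R M' N' ∘ₗ g) (a : M) (b : N) :
    f (a, b) = f (a, 0) + (0, g b) := by
  rw [← apply_zero_mk_of_comp_inr hf, ← map_add, Prod.mk_add_mk, add_zero, zero_add]

theorem ker_inf_ker_fst_eq_map_inr (hf : f ∘ₗ inr R M N = inr R M' N' ∘ₗ g) :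
    ker f ⊓ ker (fst R M N) = (ker g).map (inr R M N) := by
  ext ⟨a, b⟩
  simp only [Submodule.mem_inf, mem_ker, fst_apply, Submodule.mem_map, inr_apply, Prod.mk.injEq]
  constructor
  · rintro ⟨hab, rfl⟩
    rw [apply_zero_mk_of_comp_inr hf, Prod.mk_eq_zero] at hab
    exact ⟨b, hab.2, rfl, rfl⟩
  · rintro ⟨b, hb, rfl, rfl⟩
    rw [apply_zero_mk_of_comp_inr hf, hb]
    exact ⟨rfl, rfl⟩

theorem map_fst_ker_eq_ker {f₁ : M' × N' →ₗ[R] M'' × N''} {g₁ : N' →ₗ[R] N''}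
    (hf : f ∘ₗ inr R M N = inr R M' N' ∘ₗ g) (hf₁ : f₁ ∘ₗ inr R M' N' = inr R M'' N'' ∘ₗ g₁)
    (hff₁ : f₁ ∘ₗ f = 0) (hg : ker g₁ = range g) :
    (ker f).map (fst R M N) = ker (fst R M' N' ∘ₗ f ∘ₗ inl R M N) := by
  apply le_antisymm
  · rintro _ ⟨⟨a, b⟩, hab, rfl⟩
    rw [SetLike.mem_coe, mem_ker, apply_mk_of_comp_inr hf] at hab
    simpa using congr_arg Prod.fst hab
  · intro a ha
    rw [mem_ker, comp_apply, comp_apply, fst_apply, inl_apply] at ha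
    set c := (f (a, 0)).2
    have hfa : f (a, 0) = (0, c) := Prod.ext ha rfl
    have hc : c ∈ ker g₁ := by
      have := congr($hff₁ (a, 0))
      rw [comp_apply, hfa, apply_zero_mk_of_comp_inr hf₁, zero_apply, Prod.mk_eq_zero] at this
      exact this.2
    obtain ⟨b, hb⟩ := hg ▸ hc
    refine ⟨(a, -b), ?_, rfl⟩
    rw [SetLike.mem_coe, mem_ker, apply_mk_of_comp_inr hf, hfa, map_neg, hb, Prod.mk_add_mk,
      add_zero, add_neg_cancel, Prod.mk_zero_zero]

end LinearMap

theorem rank_ker_eq_add_of_exact_summand_general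
    (𝕂 : Type*) [Field 𝕂]
    (A B : ℕ → Type*)
    [∀ n, AddCommGroup (A n)] [∀ n, Module 𝕂 (A n)]
    [∀ n, AddCommGroup (B n)] [∀ n, Module 𝕂 (B n)]
    [∀ n, FiniteDimensional 𝕂 (A n)] [∀ n, FiniteDimensional 𝕂 (B n)]
    (d' : ∀ n, A (n + 1) →ₗ[𝕂] A n)
    (d'' : ∀ n, B (n + 1) →ₗ[𝕂] B n)
    (d : ∀ n, A (n + 1) × B (n + 1) →ₗ[𝕂] A n × B n)
    (hC : ∀ n, (d n).comp (d (n + 1)) = 0)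
    (hexact : ∀ n, LinearMap.ker (d'' n) = LinearMap.range (d'' (n + 1)))
    (hdB : ∀ n, (d n).comp (LinearMap.inr 𝕂 (A (n + 1)) (B (n + 1)))
        = (LinearMap.inr 𝕂 (A n) (B n)).comp (d'' n))
    (hdA : ∀ n, (LinearMap.fst 𝕂 (A n) (B n)).comp
        ((d n).comp (LinearMap.inl 𝕂 (A (n + 1)) (B (n + 1)))) = d' n) :
    ∀ k ≥ 1,
      Module.finrank 𝕂 (LinearMap.ker (d k))
        = Module.finrank 𝕂 (LinearMap.ker (d' k))
          + Module.finrank 𝕂 (LinearMap.ker (d'' k)) := by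
  intro k hk
  obtain ⟨m, rfl⟩ : ∃ m, k = m + 1 := ⟨k - 1, by omega⟩
  rw [← (ker (d (m + 1))).finrank_map_add_finrank_inf_ker (fst 𝕂 _ _),
    map_fst_ker_eq_ker (hdB _) (hdB m) (hC m) (hexact m), hdA,
    ker_inf_ker_fst_eq_map_inr (hdB _),
    ← (Submodule.equivMapOfInjective _ (inr_injective (R := 𝕂)) (ker (d'' (m + 1)))).finrank_eq]

/-- Lemma 2.8(1) of the paper: given cochain complexes `(A, d')`, `(B, d'')`, `(C, d)`
with `C n = A n ⊕ B n` (modeled as `A n × B n`), `A n`, `B n` finite-dimensional,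
`(B, d'')` exact, `d` restricted to `B` landing in `B` and equal to `d''`, and the
`A`-component of `d` restricted to `A` equal to `d'`, then for all `k ≥ 1`,
`rank ker d_k = rank ker d'_k + rank ker d''_k`. -/
theorem rank_ker_eq_add_of_exact_summand
    (𝕂 : Type*) [Field 𝕂]
    (A B : ℕ → Type*)
    [∀ n, AddCommGroup (A n)] [∀ n, Module 𝕂 (A n)]
    [∀ n, AddCommGroup (B n)] [∀ n, Module 𝕂 (B n)]
    [∀ n, FiniteDimensional 𝕂 (A n)] [∀ n, FiniteDimensional 𝕂 (B n)]
    (d' : ∀ n, A (n + 1) →ₗ[𝕂] A n)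
    (d'' : ∀ n, B (n + 1) →ₗ[𝕂] B n)
    (d : ∀ n, A (n + 1) × B (n + 1) →ₗ[𝕂] A n × B n)
    (hA : ∀ n, (d' n).comp (d' (n + 1)) = 0)
    (hB : ∀ n, (d'' n).comp (d'' (n + 1)) = 0)
    (hC : ∀ n, (d n).comp (d (n + 1)) = 0)
    (hexact : ∀ n, LinearMap.ker (d'' n) = LinearMap.range (d'' (n + 1)))
    (hdB : ∀ n, (d n).comp (LinearMap.inr 𝕂 (A (n + 1)) (B (n + 1)))
        = (LinearMap.inr 𝕂 (A n) (B n)).comp (d'' n))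
    (hdA : ∀ n, (LinearMap.fst 𝕂 (A n) (B n)).comp
        ((d n).comp (LinearMap.inl 𝕂 (A (n + 1)) (B (n + 1)))) = d' n) :
    ∀ k ≥ 1,
      Module.finrank 𝕂 (LinearMap.ker (d k))
        = Module.finrank 𝕂 (LinearMap.ker (d' k))
          + Module.finrank 𝕂 (LinearMap.ker (d'' k)) :=
  rank_ker_eq_add_of_exact_summand_general 𝕂 A B d' d'' d hC hexact hdB hdA
end

section
/- Let 𝕂 be a field. Suppose (A_n, d'_n), (B_n, d''_n), (C_n, d_n) are cochain complexes of 𝕂-vector spaces (with differentials d'_n : A_{n+1} → A_n, d''_n : B_{n+1} → B_n, d_n : C_{n+1} → C_n satisfying d'_{n-1} ∘ d'_n = 0, d''_{n-1} ∘ d''_n = 0, d_{n-1} ∘ d_n = 0 for all n ≥ 1) such that: (1) for every n ≥ 0, A_n and B_n are finite-dimensional; (2) the complex (B_n, d''_n) is exact, i.e. ker d''_{k-1} = im d''_k for all k ≥ 1; (3) C_n = A_n ⊕ B_n for every n; (4) d_n restricted to the summand B_{n+1} lands in B_n and coincides with d''_n, and the composite of the inclusion A_{n+1} → C_{n+1},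 the map d_n, and the projection π_{1,n} : A_n ⊕ B_n → A_n equals d'_n. Then for every k ≥ 1, rank im d_k = rank im d'_k + rank im d''_k. -/
/-!
Split `C = A ⊕ B` and look at the image `R = im d_k ⊆ A_k ⊕ B_k`. Since `d` maps `B` into `B`,
the `A`-component of `d` is `d' ∘ π₁`, so `π₁ R = im d'_k`. The part of `R` lying in `B_k` is
`im d''_k`: it contains `d''_k (B_{k+1})`, and conversely any `(0, b) ∈ R` is killed by
`d_{k-1}`, so `d''_{k-1} b = 0` and exactness puts `b` in `im d''_k`. Rank–nullity for
`π₁ : R → A_k` then gives the formula.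
-/

open LinearMap

namespace Submodule

theorem finrank_eq_finrank_map_fst_add_finrank_comap_inr {K M N : Type*} [Field K]
    [AddCommGroup M] [Module K M] [AddCommGroup N] [Module K N]
    (p : Submodule K (M × N)) [FiniteDimensional K p] :
    Module.finrank K p = Module.finrank K (p.map (LinearMap.fst K M N))
      + Module.finrank K (p.comap (LinearMap.inr K M N)) := by
  let ψ : p.comap (LinearMap.inr K M N) →ₗ[K] p :=
    ((LinearMap.inr K M N).comp (p.comap _).subtype).codRestrict p fun b => b.2
  have hψ : Function.Injective ψ := fun x y h =>
    Subtype.ext (congrArg (fun z : p => (z : M × N).2) h)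
  have hrange : range ψ = ker ((LinearMap.fst K M N).domRestrict p) := by
    ext ⟨⟨a, b⟩, hab⟩
    constructor
    · rintro ⟨x, hx⟩
      exact (congrArg (fun z : p => (z : M × N).1) hx).symm
    · rintro (rfl : a = 0)
      exact ⟨⟨b, hab⟩, rfl⟩
  rw [← range_domRestrict, ← ((LinearMap.fst K M N).domRestrict p).finrank_range_add_finrank_ker,
    ← hrange, finrank_range_of_inj hψ]

end Submodule

section UpperTriangular

variable {R M N M' N' M'' N'' : Type*} [Semiring R]
  [AddCommMonoid M] [Module R M] [AddCommMonoid N] [Module R N]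
  [AddCommMonoid M'] [Module R M'] [AddCommMonoid N'] [Module R N']
  [AddCommMonoid M''] [Module R M''] [AddCommMonoid N''] [Module R N'']
  {d : M' × N' →ₗ[R] M × N}

theorem map_fst_range_eq_range {f : M' →ₗ[R] M} {g : N' →ₗ[R] N}
    (hdA : (fst R M N).comp (d.comp (inl R M' N')) = f)
    (hdB : d.comp (inr R M' N') = (inr R M N).comp g) :
    (range d).map (fst R M N) = range f := by
  have hfst : (fst R M N).comp d = f.comp (fst R M' N') := by
    refine prod_ext ?_ ?_
    · rw [comp_assoc, hdA, comp_assoc, fst_comp_inl, comp_id]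
    · rw [comp_assoc, hdB, ← comp_assoc, fst_comp_inr, comp_assoc, fst_comp_inr, zero_comp,
        comp_zero]
  rw [← range_comp, hfst, range_comp_of_range_eq_top _ Submodule.range_fst]

theorem range_le_comap_inr_range {g : N' →ₗ[R] N}
    (hdB : d.comp (inr R M' N') = (inr R M N).comp g) :
    range g ≤ (range d).comap (inr R M N) := by
  rintro _ ⟨b, rfl⟩
  exact ⟨(0, b), LinearMap.congr_fun hdB b⟩

theorem comap_inr_range_le_ker {e : M × N →ₗ[R] M'' × N''} {g : N →ₗ[R] N''}
    (hed : e.comp d = 0) (heB : e.comp (inr R M N) = (inr R M'' N'').comp g) :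
    (range d).comap (inr R M N) ≤ ker g := by
  calc (range d).comap (inr R M N)
      ≤ (ker e).comap (inr R M N) := Submodule.comap_mono (range_le_ker_iff.mpr hed)
    _ = ker g := by rw [← ker_comp, heB, ker_comp_of_ker_eq_bot _ Submodule.ker_inr]

end UpperTriangular

theorem rank_im_eq_add_of_exact_summand_general
    (𝕂 : Type*) [Field 𝕂]
    (A B : ℕ → Type*)
    [∀ n, AddCommGroup (A n)] [∀ n, Module 𝕂 (A n)]
    [∀ n, AddCommGroup (B n)] [∀ n, Module 𝕂 (B n)]
    [∀ n, FiniteDimensional 𝕂 (A n)] [∀ n, FiniteDimensional 𝕂 (B n)]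
    (d' : ∀ n, A (n + 1) →ₗ[𝕂] A n)
    (d'' : ∀ n, B (n + 1) →ₗ[𝕂] B n)
    (d : ∀ n, A (n + 1) × B (n + 1) →ₗ[𝕂] A n × B n)
    (hC : ∀ n, (d n).comp (d (n + 1)) = 0)
    (hexact : ∀ n, LinearMap.ker (d'' n) = LinearMap.range (d'' (n + 1)))
    (hdB : ∀ n, (d n).comp (LinearMap.inr 𝕂 (A (n + 1)) (B (n + 1)))
        = (LinearMap.inr 𝕂 (A n) (B n)).comp (d'' n))
    (hdA : ∀ n, (LinearMap.fst 𝕂 (A n) (B n)).comp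
        ((d n).comp (LinearMap.inl 𝕂 (A (n + 1)) (B (n + 1)))) = d' n) :
    ∀ k ≥ 1,
      Module.finrank 𝕂 (LinearMap.range (d k))
        = Module.finrank 𝕂 (LinearMap.range (d' k))
          + Module.finrank 𝕂 (LinearMap.range (d'' k)) := by
  intro k hk
  obtain ⟨m, rfl⟩ : ∃ m, k = m + 1 := ⟨k - 1, by omega⟩
  have hcomap : (range (d (m + 1))).comap (inr 𝕂 _ _) = range (d'' (m + 1)) :=
    le_antisymm ((comap_inr_range_le_ker (hC m) (hdB m)).trans (hexact m).le)
      (range_le_comap_inr_range (hdB (m + 1)))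
  rw [Submodule.finrank_eq_finrank_map_fst_add_finrank_comap_inr,
    map_fst_range_eq_range (hdA (m + 1)) (hdB (m + 1)), hcomap]

/-- Lemma 2.8(1) of the paper: given cochain complexes `(A, d')`, `(B, d'')`, `(C, d)`
with `C n = A n ⊕ B n` (modeled as `A n × B n`), `A n`, `B n` finite-dimensional,
`(B, d'')` exact, `d` restricted to `B` landing in `B` and equal to `d''`, and the
`A`-component of `d` restricted to `A` equal to `d'`, then for all `k ≥ 1`,
`rank im d_k = rank im d'_k + rank im d''_k`. -/
theorem rank_im_eq_add_of_exact_summand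
    (𝕂 : Type*) [Field 𝕂]
    (A B : ℕ → Type*)
    [∀ n, AddCommGroup (A n)] [∀ n, Module 𝕂 (A n)]
    [∀ n, AddCommGroup (B n)] [∀ n, Module 𝕂 (B n)]
    [∀ n, FiniteDimensional 𝕂 (A n)] [∀ n, FiniteDimensional 𝕂 (B n)]
    (d' : ∀ n, A (n + 1) →ₗ[𝕂] A n)
    (d'' : ∀ n, B (n + 1) →ₗ[𝕂] B n)
    (d : ∀ n, A (n + 1) × B (n + 1) →ₗ[𝕂] A n × B n)
    (hA : ∀ n, (d' n).comp (d' (n + 1)) = 0)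
    (hB : ∀ n, (d'' n).comp (d'' (n + 1)) = 0)
    (hC : ∀ n, (d n).comp (d (n + 1)) = 0)
    (hexact : ∀ n, LinearMap.ker (d'' n) = LinearMap.range (d'' (n + 1)))
    (hdB : ∀ n, (d n).comp (LinearMap.inr 𝕂 (A (n + 1)) (B (n + 1)))
        = (LinearMap.inr 𝕂 (A n) (B n)).comp (d'' n))
    (hdA : ∀ n, (LinearMap.fst 𝕂 (A n) (B n)).comp
        ((d n).comp (LinearMap.inl 𝕂 (A (n + 1)) (B (n + 1)))) = d' n) :
    ∀ k ≥ 1,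
      Module.finrank 𝕂 (LinearMap.range (d k))
        = Module.finrank 𝕂 (LinearMap.range (d' k))
          + Module.finrank 𝕂 (LinearMap.range (d'' k)) :=
  rank_im_eq_add_of_exact_summand_general 𝕂 A B d' d'' d hC hexact hdB hdA
end

section
/- Let 𝕂 be a field. Suppose (A_n, d'_n), (B_n, d''_n), (C_n, d_n) are cochain complexes of 𝕂-vector spaces (with differentials d'_n : A_{n+1} → A_n, d''_n : B_{n+1} → B_n, d_n : C_{n+1} → C_n satisfying d'_{n-1} ∘ d'_n = 0, d''_{n-1} ∘ d''_n = 0, d_{n-1} ∘ d_n = 0 for all n ≥ 1), with A_n and B_n NOT assumed finite-dimensional, such that: (1) the complex (B_n, d''_n) is exact, i.e. ker d''_{k-1} = im d''_k for all k ≥ 1; (2) C_n = A_n ⊕ B_n for every n; (3) d_n restricted to the summand B_{n+1} lands in B_n and coincides with d''_n, and the composite of the inclusion A_{n+1} → C_{n+1}, the map d_n, and the projection π_{1,n} : A_n ⊕ B_n → A_n equals d'_n. Then for every k ≥ 1, the dimension (as a cardinal) of ker d_k equals the sum of the dimensions of ker d'_k and ker d''_k, and the dimension of im d_k equals the sum of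 the dimensions of im d'_k and im d''_k. -/
/-!
In the decomposition `C = A ⊕ B` the differential is block triangular,
`d (a, b) = (d' a, f a + d'' b)`. Since `d ∘ d = 0`, the corner `f` sends cycles of `d'` to cycles,
hence (by exactness of `B`) to boundaries of `d''`. This makes the projection to `A` fit into short
exact sequences `0 → ker d'' → ker d → ker d' → 0` and `0 → im d'' → im d → im d' → 0`,
and ranks add along short exact sequences by rank–nullity, with no finiteness needed.
-/

universe u

section Triangular

open LinearMap Module

theorem rank_eq_add_of_exact {R : Type*} {M₁ M₂ M₃ : Type u} [Ring R] [HasRankNullity.{u} R]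
    [AddCommGroup M₁] [Module R M₁] [AddCommGroup M₂] [Module R M₂]
    [AddCommGroup M₃] [Module R M₃] {i : M₁ →ₗ[R] M₂} {p : M₂ →ₗ[R] M₃}
    (hi : Function.Injective i) (hp : Function.Surjective p) (hip : Function.Exact i p) :
    Module.rank R M₂ = Module.rank R M₃ + Module.rank R M₁ := by
  rw [rank_eq_of_surjective hp, exact_iff.mp hip, rank_range_of_injective i hi]

variable {K : Type*} [DivisionRing K] {M' N' M N : Type u}
  [AddCommGroup M'] [Module K M'] [AddCommGroup N'] [Module K N']
  [AddCommGroup M] [Module K M] [AddCommGroup N] [Module K N]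
  {D : M' × N' →ₗ[K] M × N} {δ' : M' →ₗ[K] M} {δ'' : N' →ₗ[K] N} {f : M' →ₗ[K] N}

theorem apply_eq_triangular_of_comp_inl_inr
    (hinr : D ∘ₗ inr K M' N' = inr K M N ∘ₗ δ'') (hfst : fst K M N ∘ₗ D ∘ₗ inl K M' N' = δ')
    (a : M') (b : N') : D (a, b) = (δ' a, (snd K M N ∘ₗ D ∘ₗ inl K M' N') a + δ'' b) := by
  have hb : D (0, b) = (0, δ'' b) := congr($hinr b)
  have ha : (D (a, 0)).1 = δ' a := congr($hfst a)
  rw [← Prod.fst_add_snd (a, b), map_add, hb]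
  ext <;> simp [ha]

theorem rank_ker_eq_add_of_triangular (htri : ∀ a b, D (a, b) = (δ' a, f a + δ'' b))
    (hcorner : ∀ a, δ' a = 0 → f a ∈ range δ'') :
    Module.rank K (ker D) = Module.rank K (ker δ') + Module.rank K (ker δ'') := by
  let i : ker δ'' →ₗ[K] ker D := (inr K M' N').restrict fun b (hb : δ'' b = 0) => by
    simp [htri, hb]
  let p : ker D →ₗ[K] ker δ' := (fst K M' N').restrict fun c (hc : D c = 0) => by
    simpa [htri] using congr(($hc).1)
  refine rank_eq_add_of_exact (i := i) (p := p) ?_ ?_ ?_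
  · intro b b' h
    exact Subtype.ext congr(($h : M' × N').2)
  · rintro ⟨a, ha : δ' a = 0⟩
    obtain ⟨b, hb⟩ := hcorner a ha
    refine ⟨⟨(a, -b), ?_⟩, rfl⟩
    simp [htri, ha, hb]
  · rintro ⟨⟨a, b⟩, hab : D (a, b) = 0⟩
    constructor
    · intro h
      have ha : a = 0 := congr(($h : M'))
      subst ha
      refine ⟨⟨b, ?_⟩, rfl⟩
      simpa [htri] using congr(($hab).2)
    · rintro ⟨b', h⟩
      exact Subtype.ext congr(($h : M' × N').1).symm

theorem rank_range_eq_add_of_triangular (htri : ∀ a b, D (a, b) = (δ' a, f a + δ'' b))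
    (hcorner : ∀ a, δ' a = 0 → f a ∈ range δ'') :
    Module.rank K (range D) = Module.rank K (range δ') + Module.rank K (range δ'') := by
  let i : range δ'' →ₗ[K] range D := (inr K M N).restrict fun _ ⟨b, hb⟩ =>
    ⟨(0, b), by simp [htri, hb]⟩
  let p : range D →ₗ[K] range δ' := (fst K M N).restrict fun _ ⟨⟨a, b⟩, hc⟩ =>
    ⟨a, by simp [← hc, htri]⟩
  refine rank_eq_add_of_exact (i := i) (p := p) ?_ ?_ ?_
  · intro y y' h
    exact Subtype.ext congr(($h : M × N).2)
  · rintro ⟨_, a, rfl⟩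
    exact ⟨⟨D (a, 0), (a, 0), rfl⟩, Subtype.ext (by simp [p, htri])⟩
  · rintro ⟨c, ⟨a, b⟩, hab⟩
    constructor
    · intro h
      have hc1 : c.1 = 0 := congr(($h : M))
      rw [htri] at hab
      have ha : δ' a = 0 := by rw [← hc1, ← hab]
      obtain ⟨b₀, hb₀⟩ := hcorner a ha
      refine ⟨⟨c.2, b₀ + b, by rw [← hab, map_add, hb₀]⟩, Subtype.ext (Prod.ext hc1.symm rfl)⟩
    · rintro ⟨y, h⟩
      exact Subtype.ext congr(($h : M × N).1).symm

end Triangular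

theorem rank_ker_im_eq_add_of_exact_summand_infinite_general
    (𝕂 : Type*) [Field 𝕂]
    (A B : ℕ → Type u)
    [∀ n, AddCommGroup (A n)] [∀ n, Module 𝕂 (A n)]
    [∀ n, AddCommGroup (B n)] [∀ n, Module 𝕂 (B n)]
    (d' : ∀ n, A (n + 1) →ₗ[𝕂] A n)
    (d'' : ∀ n, B (n + 1) →ₗ[𝕂] B n)
    (d : ∀ n, A (n + 1) × B (n + 1) →ₗ[𝕂] A n × B n)
    (hC : ∀ n, (d n).comp (d (n + 1)) = 0)
    (hexact : ∀ n, LinearMap.ker (d'' n) = LinearMap.range (d'' (n + 1)))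
    (hdB : ∀ n, (d n).comp (LinearMap.inr 𝕂 (A (n + 1)) (B (n + 1)))
        = (LinearMap.inr 𝕂 (A n) (B n)).comp (d'' n))
    (hdA : ∀ n, (LinearMap.fst 𝕂 (A n) (B n)).comp
        ((d n).comp (LinearMap.inl 𝕂 (A (n + 1)) (B (n + 1)))) = d' n) :
    ∀ k ≥ 1,
      Module.rank 𝕂 (LinearMap.ker (d k))
        = Module.rank 𝕂 (LinearMap.ker (d' k)) + Module.rank 𝕂 (LinearMap.ker (d'' k))
      ∧ Module.rank 𝕂 (LinearMap.range (d k))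
        = Module.rank 𝕂 (LinearMap.range (d' k))
          + Module.rank 𝕂 (LinearMap.range (d'' k)) := by
  intro k hk
  obtain ⟨m, rfl⟩ := Nat.exists_eq_add_of_le' hk
  have htri := apply_eq_triangular_of_comp_inl_inr (hdB (m + 1)) (hdA (m + 1))
  set f := LinearMap.snd 𝕂 (A (m + 1)) (B (m + 1)) ∘ₗ d (m + 1) ∘ₗ
    LinearMap.inl 𝕂 (A (m + 2)) (B (m + 2))
  have hcorner : ∀ a, d' (m + 1) a = 0 → f a ∈ LinearMap.range (d'' (m + 1)) := by
    intro a ha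
    have hdd : d m (0, f a) = 0 := by simpa [htri, ha] using congr($(hC m) (a, 0))
    have hdB_apply : d m (0, f a) = (0, d'' m (f a)) := congr($(hdB m) (f a))
    rw [← hexact m, LinearMap.mem_ker]
    simpa [hdB_apply] using hdd
  exact ⟨rank_ker_eq_add_of_triangular htri hcorner, rank_range_eq_add_of_triangular htri hcorner⟩

/-- The remark after Lemma 2.8 of the paper: the conclusion of Lemma 2.8 holds without
the finite-dimensionality assumption, with dimensions understood as cardinals
(`Module.rank`) and the sums being cardinal addition. -/
theorem rank_ker_im_eq_add_of_exact_summand_infinite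
    (𝕂 : Type*) [Field 𝕂]
    (A B : ℕ → Type u)
    [∀ n, AddCommGroup (A n)] [∀ n, Module 𝕂 (A n)]
    [∀ n, AddCommGroup (B n)] [∀ n, Module 𝕂 (B n)]
    (d' : ∀ n, A (n + 1) →ₗ[𝕂] A n)
    (d'' : ∀ n, B (n + 1) →ₗ[𝕂] B n)
    (d : ∀ n, A (n + 1) × B (n + 1) →ₗ[𝕂] A n × B n)
    (hA : ∀ n, (d' n).comp (d' (n + 1)) = 0)
    (hB : ∀ n, (d'' n).comp (d'' (n + 1)) = 0)
    (hC : ∀ n, (d n).comp (d (n + 1)) = 0)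
    (hexact : ∀ n, LinearMap.ker (d'' n) = LinearMap.range (d'' (n + 1)))
    (hdB : ∀ n, (d n).comp (LinearMap.inr 𝕂 (A (n + 1)) (B (n + 1)))
        = (LinearMap.inr 𝕂 (A n) (B n)).comp (d'' n))
    (hdA : ∀ n, (LinearMap.fst 𝕂 (A n) (B n)).comp
        ((d n).comp (LinearMap.inl 𝕂 (A (n + 1)) (B (n + 1)))) = d' n) :
    ∀ k ≥ 1,
      Module.rank 𝕂 (LinearMap.ker (d k))
        = Module.rank 𝕂 (LinearMap.ker (d' k)) + Module.rank 𝕂 (LinearMap.ker (d'' k))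
      ∧ Module.rank 𝕂 (LinearMap.range (d k))
        = Module.rank 𝕂 (LinearMap.range (d' k))
          + Module.rank 𝕂 (LinearMap.range (d'' k)) :=
  rank_ker_im_eq_add_of_exact_summand_infinite_general 𝕂 A B d' d'' d hC hexact hdB hdA
end
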